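/- Let A be an admissible set of addition chains and let m ≥ n be positive integers. If q := δ^A(n) − δ^A(m) is a rational number, then q is a nonnegative integer, m = n·2^k for some integer k ≥ 0, and q = ℓ^A(n) + k − ℓ^A(m). In particular this applies when δ^A(n) = δ^A(m). -/

import Mathlib

/-- `c` is an addition chain: a nonempty list of positive integers starting at `1`
such that every later entry is the sum of two (not necessarily distinct) earlier entries. -/
def IsAdditionChain (c : List ℕ) : Prop :=
  c.getD 0 0 = 1 ∧
    ∀ k, 0 < k → k < c.length →
      ∃ i j, i < k ∧ j < k ∧ c.getD k 0 = c.getD i 0 + c.getD j 0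

/-- `c` is an addition chain whose last entry is `n`; its length is `c.length - 1`. -/
def IsAdditionChainFor (c : List ℕ) (n : ℕ) : Prop :=
  IsAdditionChain c ∧ c.getD (c.length - 1) 0 = n

/-- ν₂(n): the number of 1's in the binary expansion of `n`. -/
def binaryWeight (n : ℕ) : ℕ := (Nat.digits 2 n).sum

/-- `ℓ^A(n)`: the least length (number of steps, i.e. one less than the number of
entries) of an addition chain for `n` belonging to the set `A` of addition chains. -/
noncomputable def chainLength (A : Set (List ℕ)) (n : ℕ) : ℕ :=
  sInf {r | ∃ c ∈ A, IsAdditionChainFor c n ∧ c.length = r + 1}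

/-- A set `A` of addition chains is admissible if (i) every positive `n` has a chain
in `A` of length at most `⌊log₂ n⌋ + ν₂(n) - 1` (i.e. with at most
`⌊log₂ n⌋ + ν₂(n)` entries) and (ii) `ℓ^A(2n) ≤ ℓ^A(n) + 1` for all positive `n`. -/
def Admissible (A : Set (List ℕ)) : Prop :=
  (∀ n : ℕ, 0 < n → ∃ c ∈ A, IsAdditionChainFor c n ∧
      c.length ≤ Nat.log 2 n + binaryWeight n) ∧
  ∀ n : ℕ, 0 < n → chainLength A (2 * n) ≤ chainLength A n + 1

/-- The A-defect `δ^A(n) = ℓ^A(n) - log₂ n`. -/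
noncomputable def Adefect (A : Set (List ℕ)) (n : ℕ) : ℝ :=
  (chainLength A n : ℝ) - Real.logb 2 n

/-- `m` is A-stable if `ℓ^A(2^k m) = ℓ^A(m) + k` for all `k ≥ 0`. -/
def AStable (A : Set (List ℕ)) (m : ℕ) : Prop :=
  ∀ k : ℕ, chainLength A (2 ^ k * m) = chainLength A m + k

/-- `𝒟^A`: the set of all A-defect values. -/
def defectSet (A : Set (List ℕ)) : Set ℝ :=
  {d | ∃ n : ℕ, 0 < n ∧ d = Adefect A n}

/-- `𝒟^A_st`: the set of all A-stable defects. -/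
def stableDefectSet (A : Set (List ℕ)) : Set ℝ :=
  {d | ∃ n : ℕ, 0 < n ∧ AStable A n ∧ d = Adefect A n}

open scoped Classical in
/-- The order type of a well-ordered subset `S` of a linear order
(junk value `0` if `S` is not well-ordered, i.e. not `Set.IsWF`). -/
noncomputable def setOrderType {X : Type*} [LinearOrder X] (S : Set X) : Ordinal :=
  if h : S.IsWF then
    letI : WellFoundedLT S := ⟨h⟩
    Ordinal.type ((· < ·) : S → S → Prop)
  else 0


/-!
If `δ^A(n) - δ^A(m)` is rational then so is `log₂ (m / n)`, say `a / b` with `a, b ∈ ℕ`; hence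
`m ^ b = n ^ b * 2 ^ a`, which by unique factorisation forces `m = n * 2 ^ k`. Then
`q = ℓ^A(n) + k - ℓ^A(m)`, and doubling `k` times shows `ℓ^A(m) ≤ ℓ^A(n) + k`, so `q ∈ ℕ`.
-/

theorem Nat.exists_eq_mul_pow_of_pow_eq_pow_mul_pow {p m n a b : ℕ} (hp : p.Prime) (hn : 0 < n)
    (hb : b ≠ 0) (h : m ^ b = n ^ b * p ^ a) : ∃ k, m = n * p ^ k := by
  obtain ⟨t, rfl⟩ : n ∣ m := (Nat.pow_dvd_pow_iff hb).mp ⟨p ^ a, h⟩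
  have ht : t ^ b = p ^ a := by
    rw [mul_pow] at h
    exact Nat.eq_of_mul_eq_mul_left (Nat.pow_pos hn) h
  obtain ⟨k, -, rfl⟩ := (Nat.dvd_prime_pow hp).mp (ht ▸ dvd_pow_self t hb)
  exact ⟨k, rfl⟩

theorem Real.logb_mul_pow_self {b x : ℝ} (hb : 1 < b) (hx : x ≠ 0) (k : ℕ) :
    Real.logb b (x * b ^ k) = Real.logb b x + k := by
  rw [Real.logb_mul hx (pow_ne_zero k (by positivity)), Real.logb_pow,
    Real.logb_self_eq_one hb, mul_one]

theorem pow_eq_pow_mul_pow_of_logb_sub_eq {p m n a b : ℕ} (hp : 1 < p) (hm : 0 < m) (hn : 0 < n)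
    (hb : b ≠ 0) (h : Real.logb p m - Real.logb p n = a / b) : m ^ b = n ^ b * p ^ a := by
  have hp' : (1 : ℝ) < p := Nat.one_lt_cast.mpr hp
  have hlog : Real.logb p ((m : ℝ) ^ b) = Real.logb p ((n : ℝ) ^ b * (p : ℝ) ^ a) := by
    rw [Real.logb_mul_pow_self hp' (by positivity), Real.logb_pow, Real.logb_pow]
    field_simp at h
    linarith
  exact_mod_cast Real.logb_injOn_pos hp' (Set.mem_Ioi.mpr (by positivity))
    (Set.mem_Ioi.mpr (by positivity)) hlog

theorem exists_eq_mul_pow_of_logb_sub_eq_ratCast {p m n : ℕ} (hp : p.Prime) (hn : 0 < n)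
    (hnm : n ≤ m) (r : ℚ) (hr : (r : ℝ) = Real.logb p m - Real.logb p n) :
    ∃ k, m = n * p ^ k := by
  have hr0 : 0 ≤ r := by
    have := Real.logb_le_logb_of_le (Nat.one_lt_cast.mpr hp.one_lt) (Nat.cast_pos.mpr hn)
      (Nat.cast_le.mpr hnm)
    exact_mod_cast hr ▸ sub_nonneg.mpr this
  lift r to ℚ≥0 using hr0
  refine Nat.exists_eq_mul_pow_of_pow_eq_pow_mul_pow (a := r.num) hp hn r.den_pos.ne' ?_
  refine pow_eq_pow_mul_pow_of_logb_sub_eq hp.one_lt (hn.trans_le hnm) hn r.den_pos.ne' ?_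
  rw [← hr, ← NNRat.cast_def]
  rfl

theorem chainLength_two_pow_mul_le {A : Set (List ℕ)} (hA : Admissible A) {n : ℕ} (hn : 0 < n)
    (k : ℕ) : chainLength A (2 ^ k * n) ≤ chainLength A n + k := by
  induction k with
  | zero => simp
  | succ k ih =>
    calc chainLength A (2 ^ (k + 1) * n) = chainLength A (2 * (2 ^ k * n)) := by ring_nf
      _ ≤ chainLength A (2 ^ k * n) + 1 := hA.2 _ (by positivity)
      _ ≤ chainLength A n + (k + 1) := by omega

/-- If `m ≥ n` are positive integers and `q = δ^A(n) - δ^A(m)` is rational, then `q` is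
a nonnegative integer, `m = n·2^k` for some `k ≥ 0`, and `q = ℓ^A(n) + k - ℓ^A(m)`. -/
theorem eq_pow_two_mul_of_defect_sub_rat
    (A : Set (List ℕ)) (hA : Admissible A) (m n : ℕ) (hn : 0 < n) (hnm : n ≤ m)
    (q : ℚ) (hq : (q : ℝ) = Adefect A n - Adefect A m) :
    (∃ j : ℕ, q = (j : ℚ)) ∧
    ∃ k : ℕ, m = n * 2 ^ k ∧
      (q : ℝ) = (chainLength A n : ℝ) + (k : ℝ) - (chainLength A m : ℝ) := by
  obtain ⟨k, rfl⟩ := exists_eq_mul_pow_of_logb_sub_eq_ratCast Nat.prime_two hn hnm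
    (q - chainLength A n + chainLength A m) (by push_cast; rw [hq, Adefect, Adefect]; ring)
  have hqk : (q : ℝ) = chainLength A n + k - chainLength A (n * 2 ^ k) := by
    rw [hq, Adefect, Adefect, Nat.cast_mul, Nat.cast_pow, Nat.cast_ofNat,
      Real.logb_mul_pow_self one_lt_two (Nat.cast_ne_zero.mpr hn.ne')]
    ring
  have hle : chainLength A (n * 2 ^ k) ≤ chainLength A n + k :=
    mul_comm n (2 ^ k) ▸ chainLength_two_pow_mul_le hA hn k
  refine ⟨⟨chainLength A n + k - chainLength A (n * 2 ^ k), ?_⟩, k, rfl, hqk⟩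
  have hj : (q : ℝ) = ((chainLength A n + k - chainLength A (n * 2 ^ k) : ℕ) : ℝ) := by
    rw [hqk]; push_cast [hle]; ring
  exact_mod_cast hj
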